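/- arXiv:1308.0097 — 7 statements merged into one kernel-verified Lean document; each statement's English description precedes it below -/
import Mathlib

section
/- For every integer N ≥ 1, the polynomial p(z) = 1 + z + z² + ... + z^{N-1} + 2z^N has all its zeros in the open unit disk (i.e., p is Schur stable). -/
/-!
Multiplying by `z - 1` turns a root `z` of `p` into a solution of `2 z ^ (N + 1) = z ^ N + 1`.
If `‖z‖ ≥ 1`, then `w = z⁻¹` satisfies `w + w ^ (N + 1) = 2` with both summands in the closed unit
disk; comparing real parts forces `w = 1`, but `p(1) = N + 2 ≠ 0`.
-/

open Polynomial

lemma geom_sum_add_two_mul_pow_mul_sub_one {R : Type*} [CommRing R] (z : R) (N : ℕ) :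
    ((∑ i ∈ Finset.range N, z ^ i) + 2 * z ^ N) * (z - 1) = 2 * z ^ (N + 1) - z ^ N - 1 := by
  linear_combination geom_sum_mul z N

lemma Complex.eq_one_of_add_eq_two {a b : ℂ} (ha : ‖a‖ ≤ 1) (hb : ‖b‖ ≤ 1) (hab : a + b = 2) :
    a = 1 := by
  have hre : a.re = 1 := by
    have := congrArg Complex.re hab
    simp only [Complex.add_re, Complex.re_ofNat] at this
    linarith [a.re_le_norm, b.re_le_norm]
  have him : a.im = 0 :=
    Complex.abs_re_eq_norm.1 (by rw [hre, abs_one]; linarith [a.re_le_norm])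
  exact Complex.ext hre him

lemma Complex.eq_one_of_two_mul_pow_succ_eq {z : ℂ} (hz : 1 ≤ ‖z‖) {N : ℕ}
    (h : 2 * z ^ (N + 1) = z ^ N + 1) : z = 1 := by
  have hz₀ : z ≠ 0 := norm_pos_iff.1 (zero_lt_one.trans_le hz)
  have hw : ‖z⁻¹‖ ≤ 1 := by rw [norm_inv]; exact inv_le_one_of_one_le₀ hz
  have hsum : z⁻¹ + z⁻¹ ^ (N + 1) = 2 := by
    rw [inv_pow]
    field_simp
    linear_combination -z * h
  have hw' : ‖z⁻¹ ^ (N + 1)‖ ≤ 1 := by rw [norm_pow]; exact pow_le_one₀ (norm_nonneg _) hw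
  exact inv_eq_one.1 (eq_one_of_add_eq_two hw hw' hsum)

theorem schur_stable_bini_general (N : ℕ) :
    ∀ z : ℂ, ((∑ i ∈ Finset.range N, (X : ℂ[X]) ^ i) + C 2 * X ^ N).IsRoot z →
      ‖z‖ < 1 := by
  intro z hz
  have hroot : (∑ i ∈ Finset.range N, z ^ i) + 2 * z ^ N = 0 := by
    simpa [IsRoot, eval_finsetSum] using hz
  by_contra! hnorm
  have hpow : 2 * z ^ (N + 1) = z ^ N + 1 := by
    linear_combination -(geom_sum_add_two_mul_pow_mul_sub_one z N) + (z - 1) * hroot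
  obtain rfl := Complex.eq_one_of_two_mul_pow_succ_eq hnorm hpow
  have hN2 : (N : ℂ) + 2 = 0 := by simpa using hroot
  exact_mod_cast hN2

theorem schur_stable_bini (N : ℕ) (hN : 1 ≤ N) :
    ∀ z : ℂ, ((∑ i ∈ Finset.range N, (X : ℂ[X]) ^ i) + C 2 * X ^ N).IsRoot z →
      ‖z‖ < 1 :=
  schur_stable_bini_general N
end

section
/- For every integer N ≥ 1 and every complex z with |z| < 1, the polynomial 2 + z + z² + ... + z^N is nonzero at z. -/
/-! Multiplying by `1 - z` telescopes `2 + z + ⋯ + z ^ N` into `2 - z - z ^ (N + 1)`, which cannot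
vanish on the open unit disk because there `‖z + z ^ (N + 1)‖ < 2`. -/

open Finset

theorem sub_mul_two_add_sum_Icc_pow {R : Type*} [CommRing R] (z : R) (n : ℕ) :
    (1 - z) * (2 + ∑ i ∈ Icc 1 n, z ^ i) = 2 - z - z ^ (n + 1) := by
  induction n with
  | zero => simp only [zero_lt_one, Icc_eq_empty_of_lt, sum_empty]; ring
  | succ n ih =>
    rw [sum_Icc_succ_top (by omega)]
    linear_combination ih

theorem two_sub_sub_pow_ne_zero {𝕜 : Type*} [RCLike 𝕜] {z : 𝕜} (hz : ‖z‖ < 1) (n : ℕ) :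
    2 - z - z ^ (n + 1) ≠ 0 := by
  have hpow : ‖z‖ ^ (n + 1) ≤ ‖z‖ := pow_le_of_le_one (norm_nonneg z) hz.le n.succ_ne_zero
  have hlt : ‖z + z ^ (n + 1)‖ < ‖(2 : 𝕜)‖ :=
    calc ‖z + z ^ (n + 1)‖ ≤ ‖z‖ + ‖z‖ ^ (n + 1) := by
          simpa only [norm_pow] using norm_add_le z (z ^ (n + 1))
      _ < 2 := by linarith
      _ = ‖(2 : 𝕜)‖ := by simp
  intro h
  rw [sub_sub, sub_eq_zero] at h
  exact hlt.ne (congrArg norm h.symm)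

theorem reverse_nonzero_on_disk_general (N : ℕ) (z : ℂ) (hz : ‖z‖ < 1) :
    2 + ∑ i ∈ Finset.Icc 1 N, z ^ i ≠ 0 :=
  right_ne_zero_of_mul <| sub_mul_two_add_sum_Icc_pow z N ▸ two_sub_sub_pow_ne_zero hz N

theorem reverse_nonzero_on_disk (N : ℕ) (hN : 1 ≤ N) (z : ℂ) (hz : ‖z‖ < 1) :
    2 + ∑ i ∈ Finset.Icc 1 N, z ^ i ≠ 0 :=
  reverse_nonzero_on_disk_general N z hz
end

section
/- For every integer N ≥ 1, the polynomial ℓ_N(z) = ((1+z)^{N+1} - (1-z)^{N+1})/(2z) + (1+z)^N is a Hurwitz stable polynomial of degree N. -/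
/-!
Since `(1 + z) - (1 - z) = 2z`, the quotient in `ℓ_N` is twice the geometric sum
`∑_{i ≤ N} (1 + z)^i (1 - z)^(N - i)`, so `ℓ_N(0) = N + 2` and
`2z ℓ_N(z) = (1 + z)^N (3z + 1) - (1 - z)^(N + 1)`. The right side has degree `N + 1`
(leading coefficient `3 ± 1`), giving `deg ℓ_N = N`. At a root `z ≠ 0` with `Re z ≥ 0` we
would have `|1 - z| ≤ |1 + z|` and `|1 - z| < |3z + 1|`, so the two sides of
`(1 + z)^N (3z + 1) = (1 - z)^(N + 1)` cannot have equal modulus.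
-/

open Polynomial Finset

noncomputable def ellPoly (N : ℕ) : ℂ[X] :=
  C (2⁻¹ : ℂ) * (((1 + X) ^ (N + 1) - (1 - X) ^ (N + 1)) /ₘ X) + (1 + X) ^ N

section Numerator

variable {R : Type*} [CommRing R]

lemma one_add_X_pow_sub_one_sub_X_pow (n : ℕ) :
    (1 + X : R[X]) ^ (n + 1) - (1 - X) ^ (n + 1) =
      X * (2 * ∑ i ∈ range (n + 1), (1 + X) ^ i * (1 - X) ^ (n - i)) := by
  rw [← geom_sum₂_mul]
  simp only [add_tsub_cancel_right]
  ring

lemma coeff_one_add_X_pow_mul_three_mul_X_add_one (n : ℕ) :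
    ((1 + X : R[X]) ^ n * (3 * X + 1)).coeff (n + 1) = 3 := by
  rw [mul_add, mul_one, coeff_add, mul_left_comm, coeff_ofNat_mul, coeff_mul_X]
  simp [coeff_one_add_X_pow]

lemma coeff_one_sub_X_pow_self (n : ℕ) : ((1 - X : R[X]) ^ n).coeff n = (-1) ^ n := by
  have h : (1 - X : R[X]) = C (-1) * (X + C (-1)) := by
    simp only [map_neg, map_one]; ring
  rw [h, mul_pow, ← C_pow, coeff_C_mul, coeff_X_add_C_pow]
  simp

lemma natDegree_one_add_X_pow_mul_sub_one_sub_X_pow [IsDomain R] [CharZero R] (n : ℕ) :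
    ((1 + X : R[X]) ^ n * (3 * X + 1) - (1 - X) ^ (n + 1)).natDegree = n + 1 := by
  refine natDegree_eq_of_le_of_coeff_ne_zero (by compute_degree) ?_
  rw [coeff_sub, coeff_one_add_X_pow_mul_three_mul_X_add_one, coeff_one_sub_X_pow_self]
  rcases neg_one_pow_eq_or R (n + 1) with h | h <;> rw [h] <;> norm_num

end Numerator

lemma ellPoly_eq_geom_sum (N : ℕ) :
    ellPoly N = ∑ i ∈ range (N + 1), (1 + X) ^ i * (1 - X) ^ (N - i) + (1 + X) ^ N := by
  rw [ellPoly, one_add_X_pow_sub_one_sub_X_pow, mul_divByMonic_cancel_left _ monic_X,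
    ← mul_assoc, ← C_ofNat, ← C_mul]
  norm_num

lemma eval_zero_ellPoly (N : ℕ) : (ellPoly N).eval 0 = N + 2 := by
  simp only [ellPoly_eq_geom_sum, eval_add, eval_finsetSum, eval_mul, eval_pow, eval_one, eval_X,
    add_zero, one_pow, eval_sub, sub_zero, mul_one, sum_const, card_range, nsmul_eq_mul,
    Nat.cast_add, Nat.cast_one]
  ring

lemma eval_zero_ellPoly_ne_zero (N : ℕ) : (ellPoly N).eval 0 ≠ 0 := by
  rw [eval_zero_ellPoly]
  exact_mod_cast (N + 1).succ_ne_zero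

lemma two_mul_X_mul_ellPoly (N : ℕ) :
    2 * X * ellPoly N = (1 + X) ^ N * (3 * X + 1) - (1 - X) ^ (N + 1) := by
  rw [ellPoly_eq_geom_sum]
  linear_combination (-1 : ℂ[X]) * one_add_X_pow_sub_one_sub_X_pow (R := ℂ) N

lemma natDegree_ellPoly (N : ℕ) : (ellPoly N).natDegree = N := by
  have hne : ellPoly N ≠ 0 := fun h => eval_zero_ellPoly_ne_zero N (by simp [h])
  have h := congrArg natDegree (two_mul_X_mul_ellPoly N)
  rw [natDegree_one_add_X_pow_mul_sub_one_sub_X_pow, natDegree_mul (by simp) hne] at h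
  have : (2 * X : ℂ[X]).natDegree = 1 := by compute_degree!
  omega

lemma norm_one_sub_le_norm_one_add {z : ℂ} (hz : 0 ≤ z.re) : ‖1 - z‖ ≤ ‖1 + z‖ := by
  rw [Complex.norm_def, Complex.norm_def]
  apply Real.sqrt_le_sqrt
  simp only [Complex.normSq_apply, Complex.add_re, Complex.add_im, Complex.sub_re, Complex.sub_im,
    Complex.one_re, Complex.one_im]
  nlinarith

lemma norm_one_sub_lt_norm_three_mul_add_one {z : ℂ} (hz : 0 ≤ z.re) (hz0 : z ≠ 0) :
    ‖1 - z‖ < ‖3 * z + 1‖ := by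
  have hsq : 0 < z.re * z.re + z.im * z.im := by
    simpa only [Complex.normSq_apply] using Complex.normSq_pos.mpr hz0
  rw [Complex.norm_def, Complex.norm_def]
  apply Real.sqrt_lt_sqrt (Complex.normSq_nonneg _)
  simp only [Complex.normSq_apply, Complex.sub_re, Complex.one_re, Complex.sub_im, Complex.one_im,
    zero_sub, mul_neg, neg_mul, neg_neg, Complex.add_re, Complex.mul_re, Complex.re_ofNat,
    Complex.im_ofNat, zero_mul, sub_zero, Complex.add_im, Complex.mul_im, add_zero]
  nlinarith

lemma re_neg_of_one_add_pow_mul_eq_one_sub_pow {z : ℂ} {n : ℕ} (hz0 : z ≠ 0)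
    (h : (1 + z) ^ n * (3 * z + 1) = (1 - z) ^ (n + 1)) : z.re < 0 := by
  by_contra! hre
  have hpos : 0 < ‖1 + z‖ :=
    calc (0 : ℝ) < (1 + z).re := by rw [Complex.add_re, Complex.one_re]; linarith
      _ ≤ ‖1 + z‖ := Complex.re_le_norm _
  have hlt : ‖1 - z‖ ^ (n + 1) < ‖1 + z‖ ^ n * ‖3 * z + 1‖ := by
    rw [pow_succ]
    exact mul_lt_mul' (pow_le_pow_left₀ (norm_nonneg _) (norm_one_sub_le_norm_one_add hre) n)
      (norm_one_sub_lt_norm_three_mul_add_one hre hz0) (norm_nonneg _) (pow_pos hpos n)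
  rw [← norm_pow, ← norm_pow, ← norm_mul, h] at hlt
  exact hlt.false

theorem ellN_hurwitz_general (N : ℕ) :
    (C (2⁻¹ : ℂ) * (((1 + X) ^ (N + 1) - (1 - X) ^ (N + 1)) /ₘ X)
        + (1 + X) ^ N).natDegree = N ∧
    ∀ z : ℂ, (C (2⁻¹ : ℂ) * (((1 + X) ^ (N + 1) - (1 - X) ^ (N + 1)) /ₘ X)
        + (1 + X) ^ N).IsRoot z → z.re < 0 := by
  refine ⟨natDegree_ellPoly N, fun z hz => ?_⟩
  have hz0 : z ≠ 0 := by
    rintro rfl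
    exact eval_zero_ellPoly_ne_zero N hz
  refine re_neg_of_one_add_pow_mul_eq_one_sub_pow (n := N) hz0 ?_
  have h := congrArg (eval z) (two_mul_X_mul_ellPoly N)
  simp only [eval_mul, eval_sub, eval_pow, eval_add, eval_one, eval_X, eval_ofNat] at h
  rw [show (ellPoly N).eval z = 0 from hz, mul_zero] at h
  exact sub_eq_zero.mp h.symm

theorem ellN_hurwitz (N : ℕ) (hN : 1 ≤ N) :
    (C (2⁻¹ : ℂ) * (((1 + X) ^ (N + 1) - (1 - X) ^ (N + 1)) /ₘ X)
        + (1 + X) ^ N).natDegree = N ∧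
    ∀ z : ℂ, (C (2⁻¹ : ℂ) * (((1 + X) ^ (N + 1) - (1 - X) ^ (N + 1)) /ₘ X)
        + (1 + X) ^ N).IsRoot z → z.re < 0 :=
  ellN_hurwitz_general N
end

section
/- Let p(z) = p_N z^N + ... + p_0 be a Hurwitz stable polynomial with real coefficients of even degree N with p_N ≥ 1 and p_0 ≥ 1. Then for every real v ≥ 1, p(v) ≥ (v² + 1)^{N/2}. -/
/-!
Over `ℂ`, `p(v)² = p_N² ∏ |v - a|²` over the roots `a`, and `Re a < 0` gives
`|v - a|² ≥ v² + |a|²` for `v ≥ 0`. Weighted AM-GM with weights `A/(A+1)`, `1/(A+1)` on `1` and `t`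
gives `A + t ≥ (A + 1) t^(1/(A+1))`; with `A = v²` and `t = |a|²` the product is at least
`(v² + 1)^N (∏ |a|²)^(1/(v²+1))`, and `∏ |a|² = (p_0 / p_N)²` with `p_0, p_N ≥ 1` makes
`p_N² (∏ |a|²)^(1/(v²+1)) ≥ 1`. Since `p` has no real zero in `[0, ∞)` and `p(0) > 0`, `p(v) > 0`
and the square root may be taken.
-/

open Polynomial

theorem Real.add_one_mul_rpow_le_add {A t : ℝ} (hA : 0 ≤ A) (ht : 0 ≤ t) :
    (A + 1) * t ^ (A + 1)⁻¹ ≤ A + t := by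
  have hA1 : 0 < A + 1 := by linarith
  have h := Real.geom_mean_le_arith_mean2_weighted (p₁ := 1) (p₂ := t)
    (div_nonneg hA hA1.le) (inv_nonneg.mpr hA1.le) zero_le_one ht (by field_simp)
  rw [Real.one_rpow, one_mul] at h
  calc (A + 1) * t ^ (A + 1)⁻¹ ≤ (A + 1) * (A / (A + 1) * 1 + (A + 1)⁻¹ * t) := by gcongr
    _ = A + t := by field_simp

namespace Multiset

variable {ι : Type*} {A : ℝ} {t : ι → ℝ}

theorem pow_card_mul_prod_rpow_le_prod_map_add (hA : 0 ≤ A) (s : Multiset ι)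
    (ht : ∀ i ∈ s, 0 ≤ t i) :
    (A + 1) ^ card s * (s.map t).prod ^ (A + 1)⁻¹ ≤ (s.map fun i => A + t i).prod := by
  induction s using Multiset.induction_on with
  | empty => simp
  | cons a s ih =>
    have hta : 0 ≤ t a := ht a (mem_cons_self a s)
    have hts : ∀ i ∈ s, 0 ≤ t i := fun i hi => ht i (mem_cons_of_mem hi)
    rw [card_cons, map_cons, map_cons, prod_cons, prod_cons,
      Real.mul_rpow hta (prod_map_nonneg hts), pow_succ]
    calc (A + 1) ^ card s * (A + 1) * (t a ^ (A + 1)⁻¹ * (s.map t).prod ^ (A + 1)⁻¹)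
        = ((A + 1) * t a ^ (A + 1)⁻¹) * ((A + 1) ^ card s * (s.map t).prod ^ (A + 1)⁻¹) := by
          ring
      _ ≤ (A + t a) * (s.map fun i => A + t i).prod :=
          mul_le_mul (Real.add_one_mul_rpow_le_add hA hta) (ih hts)
            (mul_nonneg (by positivity) (Real.rpow_nonneg (prod_map_nonneg hts) _))
            (by linarith)

theorem pow_card_le_mul_prod_map_add (hA : 0 ≤ A) {c : ℝ} (hc : 1 ≤ c) (s : Multiset ι)
    (ht : ∀ i ∈ s, 0 ≤ t i) (hprod : 1 ≤ c * (s.map t).prod) :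
    (A + 1) ^ card s ≤ c * (s.map fun i => A + t i).prod := by
  set w := (A + 1)⁻¹
  have hw : w ≤ 1 := inv_le_one_of_one_le₀ (by linarith)
  have hP : 0 ≤ (s.map t).prod := prod_map_nonneg ht
  have hone : 1 ≤ c * (s.map t).prod ^ w :=
    calc 1 ≤ (c * (s.map t).prod) ^ w := Real.one_le_rpow hprod (by positivity)
      _ = c ^ w * (s.map t).prod ^ w := Real.mul_rpow (by linarith) hP
      _ ≤ c * (s.map t).prod ^ w := by
          gcongr
          simpa using Real.rpow_le_rpow_of_exponent_le hc hw
  calc (A + 1) ^ card s ≤ (c * (s.map t).prod ^ w) * (A + 1) ^ card s :=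
        le_mul_of_one_le_left (by positivity) hone
    _ = c * ((A + 1) ^ card s * (s.map t).prod ^ w) := by ring
    _ ≤ c * (s.map fun i => A + t i).prod := by
        gcongr
        exact pow_card_mul_prod_rpow_le_prod_map_add hA s ht

end Multiset

theorem Complex.sq_add_normSq_le_normSq_sub {x : ℝ} {a : ℂ} (hx : 0 ≤ x) (ha : a.re ≤ 0) :
    x ^ 2 + normSq a ≤ normSq (x - a) := by
  simp only [normSq_apply, sub_re, sub_im, ofReal_re, ofReal_im]
  nlinarith

theorem Polynomial.eval_sq_eq_leadingCoeff_sq_mul_prod_normSq (p : ℝ[X]) (x : ℝ) :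
    p.eval x ^ 2 = p.leadingCoeff ^ 2 *
      ((p.map (algebraMap ℝ ℂ)).roots.map fun a => Complex.normSq (x - a)).prod := by
  have h := congrArg Complex.normSq
    ((IsAlgClosed.splits (p.map (algebraMap ℝ ℂ))).eval_eq_prod_roots (algebraMap ℝ ℂ x))
  rw [map_mul, map_multiset_prod, Multiset.map_map,
    leadingCoeff_map_of_injective (algebraMap ℝ ℂ).injective, eval_map, eval₂_at_apply] at h
  simpa [Complex.normSq_ofReal, Function.comp_def, sq] using h

theorem ContinuousOn.pos_of_ne_zero {f : ℝ → ℝ} {a b : ℝ} (hab : a ≤ b)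
    (hf : ContinuousOn f (Set.Icc a b)) (ha : 0 < f a) (hne : ∀ x ∈ Set.Icc a b, f x ≠ 0) :
    0 < f b := by
  by_contra! hb
  obtain ⟨x, hx, hfx⟩ := intermediate_value_Icc' hab hf ⟨hb, ha.le⟩
  exact hne x hx hfx

theorem beauzamy_inequality_general (N : ℕ) (p : ℝ[X])
    (hdeg : p.natDegree = N) (hlead : 1 ≤ p.leadingCoeff) (hconst : 1 ≤ p.coeff 0)
    (hstab : ∀ z : ℂ, (p.map (algebraMap ℝ ℂ)).IsRoot z → z.re < 0)
    (v : ℝ) (hv : 1 ≤ v) :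
    (v ^ 2 + 1) ^ (N / 2) ≤ p.eval v := by
  set roots := (p.map (algebraMap ℝ ℂ)).roots
  have hv0 : 0 ≤ v := by linarith
  have hcard : roots.card = N := by
    rw [← (IsAlgClosed.splits _).natDegree_eq_card_roots, natDegree_map, hdeg]
  have hroots_re : ∀ a ∈ roots, a.re ≤ 0 := fun a ha => (hstab a (isRoot_of_mem_roots ha)).le
  have hprod_roots : p.coeff 0 ^ 2 = p.leadingCoeff ^ 2 * (roots.map Complex.normSq).prod := by
    simpa [← coeff_zero_eq_eval_zero] using p.eval_sq_eq_leadingCoeff_sq_mul_prod_normSq 0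
  have hsq : (v ^ 2 + 1) ^ N ≤ p.eval v ^ 2 :=
    calc (v ^ 2 + 1) ^ N = (v ^ 2 + 1) ^ roots.card := by rw [hcard]
      _ ≤ p.leadingCoeff ^ 2 * (roots.map fun a => v ^ 2 + Complex.normSq a).prod :=
          Multiset.pow_card_le_mul_prod_map_add (sq_nonneg v) (one_le_pow₀ hlead) roots
            (fun a _ => Complex.normSq_nonneg a) (hprod_roots ▸ one_le_pow₀ hconst)
      _ ≤ p.leadingCoeff ^ 2 * (roots.map fun a => Complex.normSq (v - a)).prod := by
          gcongr
          exact Multiset.prod_map_le_prod_map₀ _ _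
            (fun a _ => add_nonneg (sq_nonneg v) (Complex.normSq_nonneg a))
            fun a ha => Complex.sq_add_normSq_le_normSq_sub hv0 (hroots_re a ha)
      _ = p.eval v ^ 2 := (p.eval_sq_eq_leadingCoeff_sq_mul_prod_normSq v).symm
  have hpos : 0 < p.eval v := by
    refine p.continuous.continuousOn.pos_of_ne_zero hv0
      (by rw [← coeff_zero_eq_eval_zero]; linarith) fun x hx hpx => ?_
    have := hstab (algebraMap ℝ ℂ x) (IsRoot.map hpx)
    simp only [Complex.coe_algebraMap, Complex.ofReal_re] at this
    linarith [hx.1]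
  rw [← pow_le_pow_iff_left₀ (by positivity) hpos.le two_ne_zero, ← pow_mul]
  calc (v ^ 2 + 1) ^ (N / 2 * 2) ≤ (v ^ 2 + 1) ^ N :=
        pow_le_pow_right₀ (by nlinarith) (Nat.div_mul_le_self N 2)
    _ ≤ p.eval v ^ 2 := hsq

theorem beauzamy_inequality (N : ℕ) (hNe : Even N) (p : ℝ[X])
    (hdeg : p.natDegree = N) (hlead : 1 ≤ p.leadingCoeff) (hconst : 1 ≤ p.coeff 0)
    (hstab : ∀ z : ℂ, (p.map (algebraMap ℝ ℂ)).IsRoot z → z.re < 0)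
    (v : ℝ) (hv : 1 ≤ v) :
    (v ^ 2 + 1) ^ (N / 2) ≤ p.eval v :=
  beauzamy_inequality_general N p hdeg hlead hconst hstab v hv
end

section
/- Let p(z) = p_N z^N + ... + p_0 be a Hurwitz stable real polynomial of even degree N with p_N ≥ 1 and p_0 ≥ 1. Then the sum of its coefficients is at least 2^{N/2}. -/
/-!
Over `ℂ`, `p(x) = a ∏ (x - z)` over the roots `z`. A root with `re z ≤ 0` satisfies
`|1 - z|² = 1 - 2 re z + |z|² ≥ 1 + |z|² ≥ 2 |z|`, so taking the product over all `N` roots gives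
`p(1)² ≥ 2^N a |p(0)| ≥ 2^N`. Finally `p(1) > 0`: `p(0) > 0` and `p` has no root in `[0, 1]`.
-/

open Polynomial

lemma Complex.two_mul_norm_le_norm_one_sub_sq {z : ℂ} (hz : z.re ≤ 0) :
    2 * ‖z‖ ≤ ‖1 - z‖ ^ 2 := by
  have h : ‖1 - z‖ ^ 2 = 1 - 2 * z.re + ‖z‖ ^ 2 := by
    simp only [Complex.sq_norm, Complex.normSq_apply, Complex.sub_re, Complex.sub_im,
      Complex.one_re, Complex.one_im]
    ring
  nlinarith [sq_nonneg (‖z‖ - 1)]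

lemma Polynomial.norm_eval_eq_prod_roots (q : ℂ[X]) (x : ℂ) :
    ‖q.eval x‖ = ‖q.leadingCoeff‖ * (q.roots.map fun z => ‖x - z‖).prod := by
  rw [(IsAlgClosed.splits q).eval_eq_prod_roots, norm_mul]
  exact congrArg _ ((map_multiset_prod (normHom : ℂ →*₀ ℝ) _).trans
    (congrArg _ (Multiset.map_map _ _ _)))

lemma Polynomial.two_pow_natDegree_mul_norm_eval_zero_le {q : ℂ[X]}
    (hq : ∀ z ∈ q.roots, z.re ≤ 0) :
    2 ^ q.natDegree * ‖q.leadingCoeff‖ * ‖q.eval 0‖ ≤ ‖q.eval 1‖ ^ 2 := by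
  have hroots : (q.roots.map fun z => 2 * ‖z‖).prod ≤ (q.roots.map fun z => ‖1 - z‖ ^ 2).prod :=
    Multiset.prod_map_le_prod_map₀ _ _ (fun z _ => by positivity)
      fun z hz => Complex.two_mul_norm_le_norm_one_sub_sq (hq z hz)
  rw [Multiset.prod_map_mul, Multiset.map_const', Multiset.prod_replicate,
    Multiset.prod_map_pow] at hroots
  rw [norm_eval_eq_prod_roots, norm_eval_eq_prod_roots,
    (IsAlgClosed.splits q).natDegree_eq_card_roots]
  simp only [zero_sub, norm_neg]
  calc 2 ^ q.roots.card * ‖q.leadingCoeff‖ * (‖q.leadingCoeff‖ * (q.roots.map (‖·‖)).prod)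
      = ‖q.leadingCoeff‖ ^ 2 * (2 ^ q.roots.card * (q.roots.map (‖·‖)).prod) := by ring
    _ ≤ ‖q.leadingCoeff‖ ^ 2 * (q.roots.map fun z => ‖1 - z‖).prod ^ 2 := by gcongr
    _ = _ := by ring

lemma Polynomial.eval_pos_of_eval_pos_of_forall_ne_zero {p : ℝ[X]} {a b : ℝ} (hab : a ≤ b)
    (ha : 0 < p.eval a) (hp : ∀ x ∈ Set.Icc a b, p.eval x ≠ 0) : 0 < p.eval b := by
  by_contra! hb
  obtain ⟨x, hx, hroot⟩ := intermediate_value_Icc' hab p.continuous.continuousOn ⟨hb, ha.le⟩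
  exact hp x hx hroot

theorem coeff_sum_lower_bound_general (N : ℕ) (p : ℝ[X])
    (hdeg : p.natDegree = N) (hlead : 1 ≤ p.leadingCoeff) (hconst : 1 ≤ p.coeff 0)
    (hstab : ∀ z : ℂ, (p.map (algebraMap ℝ ℂ)).IsRoot z → z.re < 0) :
    (2 : ℝ) ^ (N / 2) ≤ ∑ i ∈ Finset.range (N + 1), p.coeff i := by
  set q := p.map (algebraMap ℝ ℂ)
  have hq_eval (x : ℝ) : q.eval (x : ℂ) = ((p.eval x : ℝ) : ℂ) :=
    (eval_map_algebraMap p _).trans (aeval_algebraMap_apply_eq_algebraMap_eval x p)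
  have hsq : 2 ^ N * p.leadingCoeff * p.coeff 0 ≤ p.eval 1 ^ 2 := by
    have key := two_pow_natDegree_mul_norm_eval_zero_le (q := q)
      fun z hz => (hstab z (mem_roots'.mp hz).2).le
    rw [natDegree_map, hdeg, leadingCoeff_map_of_injective (algebraMap ℝ ℂ).injective,
      ← Complex.ofReal_zero, ← Complex.ofReal_one, hq_eval, hq_eval] at key
    simp only [Complex.coe_algebraMap, Complex.norm_real, Real.norm_eq_abs,
      ← coeff_zero_eq_eval_zero, sq_abs] at key
    rwa [abs_of_pos (by linarith), abs_of_pos (by linarith)] at key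
  have hpos : 0 < p.eval 1 := by
    refine eval_pos_of_eval_pos_of_forall_ne_zero zero_le_one
      (by rw [← coeff_zero_eq_eval_zero]; linarith) fun x hx hroot => ?_
    have hx_neg : (x : ℂ).re < 0 := hstab x (by rw [IsRoot, hq_eval, hroot, Complex.ofReal_zero])
    exact hx.1.not_gt (by simpa using hx_neg)
  have hsum : p.eval 1 = ∑ i ∈ Finset.range (N + 1), p.coeff i := by
    simp [eval_eq_sum_range, hdeg]
  rw [← hsum, ← pow_le_pow_iff_left₀ (by positivity) hpos.le two_ne_zero]
  calc ((2 : ℝ) ^ (N / 2)) ^ 2 ≤ 2 ^ N := by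
        rw [← pow_mul]; exact pow_le_pow_right₀ one_le_two (Nat.div_mul_le_self N 2)
    _ ≤ 2 ^ N * (p.leadingCoeff * p.coeff 0) :=
        le_mul_of_one_le_right (by positivity) (one_le_mul_of_one_le_of_one_le hlead hconst)
    _ ≤ p.eval 1 ^ 2 := by rwa [← mul_assoc]

theorem coeff_sum_lower_bound (N : ℕ) (hNe : Even N) (p : ℝ[X])
    (hdeg : p.natDegree = N) (hlead : 1 ≤ p.leadingCoeff) (hconst : 1 ≤ p.coeff 0)
    (hstab : ∀ z : ℂ, (p.map (algebraMap ℝ ℂ)).IsRoot z → z.re < 0) :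
    (2 : ℝ) ^ (N / 2) ≤ ∑ i ∈ Finset.range (N + 1), p.coeff i :=
  coeff_sum_lower_bound_general N p hdeg hlead hconst hstab
end

section
/- Let p(z) = p_N z^N + ... + p_0 be a Hurwitz stable real polynomial of even degree N with p_N ≥ 1 and p_0 ≥ 1. Then at least one coefficient of p is greater than or equal to 2^{N/2}/(N+1). -/
/-!
Over `ℂ`, `p(1)² = p_N² ∏ |1 - r|²` and `p_N p_0 = p_N² ∏ |r|`, the products running over
the roots `r` of `p`. For `Re r ≤ 0` we have `|1 - r|² = 1 - 2 Re r + |r|² ≥ 1 + |r|² ≥ 2|r|`,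
hence `p(1)² ≥ 2^N p_N p_0 ≥ 2^N`. Since `p(0) > 0` and `p` has no root in `[0, 1]`, `p(1) > 0`, so
`p(1) ≥ 2^(N/2)`; and `p(1)` is the sum of the `N + 1` coefficients, one of which is therefore at
least `p(1) / (N + 1)`.
-/

open Polynomial

lemma Complex.two_mul_norm_le_norm_one_sub_sq_s7 {r : ℂ} (hr : r.re ≤ 0) :
    2 * ‖r‖ ≤ ‖1 - r‖ ^ 2 := by
  have h : ‖1 - r‖ ^ 2 = 1 - 2 * r.re + ‖r‖ ^ 2 := by
    simp only [Complex.sq_norm, Complex.normSq_apply, Complex.sub_re, Complex.sub_im,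
      Complex.one_re, Complex.one_im]
    ring
  nlinarith [sq_nonneg (‖r‖ - 1)]

namespace Polynomial

lemma norm_eval_eq_prod_roots_s7 (q : ℂ[X]) (x : ℂ) :
    ‖q.eval x‖ = ‖q.leadingCoeff‖ * (q.roots.map fun r => ‖x - r‖).prod := by
  rw [(IsAlgClosed.splits q).eval_eq_prod_roots, norm_mul]
  congr 1
  exact (map_multiset_prod (normHom : ℂ →*₀ ℝ) _).trans (by rw [Multiset.map_map]; rfl)

lemma two_pow_mul_norm_leadingCoeff_mul_norm_eval_zero_le_norm_eval_one_sq {q : ℂ[X]}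
    (hq : ∀ r ∈ q.roots, r.re ≤ 0) :
    2 ^ q.natDegree * (‖q.leadingCoeff‖ * ‖q.eval 0‖) ≤ ‖q.eval 1‖ ^ 2 := by
  have hprod :
      (q.roots.map fun r => 2 * ‖r‖).prod ≤ (q.roots.map fun r => ‖1 - r‖ ^ 2).prod :=
    Multiset.prod_map_le_prod_map₀ _ _ (fun r _ => by positivity)
      fun r hr => Complex.two_mul_norm_le_norm_one_sub_sq_s7 (hq r hr)
  rw [Multiset.prod_map_mul, Multiset.map_const', Multiset.prod_replicate,
    IsAlgClosed.card_roots_eq_natDegree, Multiset.prod_map_pow] at hprod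
  rw [norm_eval_eq_prod_roots_s7 q 0, norm_eval_eq_prod_roots_s7 q 1]
  simp only [zero_sub, norm_neg]
  calc
    2 ^ q.natDegree * (‖q.leadingCoeff‖ * (‖q.leadingCoeff‖ * (q.roots.map (‖·‖)).prod))
      = ‖q.leadingCoeff‖ ^ 2 * (2 ^ q.natDegree * (q.roots.map (‖·‖)).prod) := by ring
    _ ≤ ‖q.leadingCoeff‖ ^ 2 * (q.roots.map fun r => ‖1 - r‖).prod ^ 2 := by gcongr
    _ = (‖q.leadingCoeff‖ * (q.roots.map fun r => ‖1 - r‖).prod) ^ 2 := by ring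

lemma two_pow_mul_abs_leadingCoeff_mul_abs_coeff_zero_le_eval_one_sq {p : ℝ[X]}
    (hp : ∀ z : ℂ, (p.map (algebraMap ℝ ℂ)).IsRoot z → z.re ≤ 0) :
    2 ^ p.natDegree * (|p.leadingCoeff| * |p.coeff 0|) ≤ p.eval 1 ^ 2 := by
  have h := two_pow_mul_norm_leadingCoeff_mul_norm_eval_zero_le_norm_eval_one_sq
    fun r hr => hp r (isRoot_of_mem_roots hr)
  have hinj := (algebraMap ℝ ℂ).injective
  rwa [natDegree_map_eq_of_injective hinj, leadingCoeff_map_of_injective hinj, eval_map,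
    eval_map, eval₂_at_one, eval₂_at_zero, norm_algebraMap', norm_algebraMap',
    norm_algebraMap', Real.norm_eq_abs, Real.norm_eq_abs, Real.norm_eq_abs, sq_abs] at h

lemma eval_pos_of_forall_not_isRoot {p : ℝ[X]} {a b : ℝ} (hab : a ≤ b) (ha : 0 < p.eval a)
    (hroot : ∀ x ∈ Set.Icc a b, ¬p.IsRoot x) : 0 < p.eval b := by
  by_contra! hb
  obtain ⟨x, hx, hpx⟩ := intermediate_value_Icc' hab p.continuous.continuousOn ⟨hb, ha.le⟩
  exact hroot x hx hpx

lemma exists_eval_one_div_le_coeff (p : ℝ[X]) :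
    ∃ i ≤ p.natDegree, p.eval 1 / (p.natDegree + 1) ≤ p.coeff i := by
  have hsum : ∑ _i ∈ Finset.range (p.natDegree + 1), p.eval 1 / (p.natDegree + 1)
      ≤ ∑ i ∈ Finset.range (p.natDegree + 1), p.coeff i := by
    rw [Finset.sum_const, Finset.card_range, nsmul_eq_mul, Nat.cast_add_one,
      mul_div_cancel₀ _ (by positivity), eval_eq_sum_range]
    simp only [one_pow, mul_one, le_refl]
  obtain ⟨i, hi, hle⟩ := Finset.exists_le_of_sum_le Finset.nonempty_range_add_one hsum
  exact ⟨i, Nat.lt_succ_iff.mp (Finset.mem_range.mp hi), hle⟩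

end Polynomial

theorem max_coeff_lower_bound_general (N : ℕ) (p : ℝ[X])
    (hdeg : p.natDegree = N) (hlead : 1 ≤ p.leadingCoeff) (hconst : 1 ≤ p.coeff 0)
    (hstab : ∀ z : ℂ, (p.map (algebraMap ℝ ℂ)).IsRoot z → z.re < 0) :
    ∃ i ≤ N, (2 : ℝ) ^ (N / 2) / (N + 1) ≤ p.coeff i := by
  subst hdeg
  have hsq : 2 ^ p.natDegree ≤ p.eval 1 ^ 2 := by
    have h := two_pow_mul_abs_leadingCoeff_mul_abs_coeff_zero_le_eval_one_sq
      fun z hz => (hstab z hz).le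
    rw [abs_of_pos (by linarith), abs_of_pos (by linarith)] at h
    exact (le_mul_of_one_le_right (by positivity)
      (one_le_mul_of_one_le_of_one_le hlead hconst)).trans h
  have hpos : 0 < p.eval 1 :=
    eval_pos_of_forall_not_isRoot zero_le_one (by rw [← coeff_zero_eq_eval_zero]; linarith)
      fun x hx hroot => (hstab _ (hroot.map (f := algebraMap ℝ ℂ))).not_ge (by simpa using hx.1)
  have hhalf : 2 ^ (p.natDegree / 2) ≤ p.eval 1 := by
    rw [← pow_le_pow_iff_left₀ (by positivity) hpos.le two_ne_zero, ← pow_mul]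
    exact (pow_le_pow_right₀ one_le_two (Nat.div_mul_le_self _ 2)).trans hsq
  obtain ⟨i, hi, hle⟩ := exists_eval_one_div_le_coeff p
  exact ⟨i, hi, (div_le_div_of_nonneg_right hhalf (by positivity)).trans hle⟩

theorem max_coeff_lower_bound (N : ℕ) (hNe : Even N) (p : ℝ[X])
    (hdeg : p.natDegree = N) (hlead : 1 ≤ p.leadingCoeff) (hconst : 1 ≤ p.coeff 0)
    (hstab : ∀ z : ℂ, (p.map (algebraMap ℝ ℂ)).IsRoot z → z.re < 0) :
    ∃ i ≤ N, (2 : ℝ) ^ (N / 2) / (N + 1) ≤ p.coeff i :=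
  max_coeff_lower_bound_general N p hdeg hlead hconst hstab
end

section
/- If q is a Hurwitz stable polynomial of degree N, then the polynomial p(z) = z^N · q(z + 1/z) is a Hurwitz stable polynomial of degree 2N. -/
open Polynomial

theorem doubling_hurwitz (N : ℕ) (q : ℂ[X]) (hq : q ≠ 0) (hdeg : q.natDegree = N)
    (hstab : ∀ z : ℂ, q.IsRoot z → z.re < 0) :
    (∑ k ∈ Finset.range (N + 1),
        C (q.coeff k) * (X ^ 2 + 1) ^ k * X ^ (N - k)).natDegree = 2 * N ∧
    ∀ z : ℂ, (∑ k ∈ Finset.range (N + 1),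
        C (q.coeff k) * (X ^ 2 + 1) ^ k * X ^ (N - k)).IsRoot z → z.re < 0 := by
  set p : ℂ[X] := ∑ k ∈ Finset.range (N + 1),
        C (q.coeff k) * (X ^ 2 + 1) ^ k * X ^ (N - k) with hp
  have hqN : q.coeff N ≠ 0 := by
    rw [← hdeg]; exact leadingCoeff_ne_zero.mpr hq
  have hmon : ((X : ℂ[X]) ^ 2 + 1).Monic := by
    apply monic_X_pow_add
    simp
  have hmonpow : ∀ k, (((X : ℂ[X]) ^ 2 + 1) ^ k).Monic := hmon.pow
  have hX2deg : ((X : ℂ[X]) ^ 2 + 1).natDegree = 2 := by compute_degree!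
  have hpowdeg : ∀ k, (((X : ℂ[X]) ^ 2 + 1) ^ k).natDegree = 2 * k := by
    intro k; rw [natDegree_pow, hX2deg, mul_comm]
  have hterm : ∀ k, k ≤ N →
      (C (q.coeff k) * (X ^ 2 + 1) ^ k * X ^ (N - k) : ℂ[X]).natDegree ≤ N + k := by
    intro k hk
    calc (C (q.coeff k) * (X ^ 2 + 1) ^ k * X ^ (N - k) : ℂ[X]).natDegree
        ≤ (C (q.coeff k) * (X ^ 2 + 1) ^ k : ℂ[X]).natDegree + (X ^ (N - k) : ℂ[X]).natDegree :=
          natDegree_mul_le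
      _ ≤ ((C (q.coeff k) : ℂ[X]).natDegree + ((X ^ 2 + 1 : ℂ[X]) ^ k).natDegree)
            + (X ^ (N - k) : ℂ[X]).natDegree := by gcongr; exact natDegree_mul_le
      _ = (0 + 2 * k) + (N - k) := by rw [natDegree_C, hpowdeg, natDegree_X_pow]
      _ ≤ N + k := by omega
  have hcoeff : p.coeff (2 * N) = q.coeff N := by
    rw [hp, finset_sum_coeff]
    rw [Finset.sum_eq_single N]
    · simp only [Nat.sub_self, pow_zero, mul_one, coeff_C_mul]
      have h1 : (((X : ℂ[X]) ^ 2 + 1) ^ N).coeff (2 * N) = 1 := by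
        have := (hmonpow N).coeff_natDegree
        rwa [hpowdeg] at this
      rw [h1, mul_one]
    · intro k hk hkN
      apply coeff_eq_zero_of_natDegree_lt
      have hk' : k ≤ N := by simpa [Nat.lt_succ_iff] using Finset.mem_range.mp hk
      exact lt_of_le_of_lt (hterm k hk') (by omega)
    · intro h; exact absurd (Finset.self_mem_range_succ N) h
  have hdeg2 : p.natDegree = 2 * N := by
    apply le_antisymm
    · apply natDegree_sum_le_of_forall_le
      intro k hk
      have hk' : k ≤ N := by simpa [Nat.lt_succ_iff] using Finset.mem_range.mp hk
      exact (hterm k hk').trans (by omega)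
    · apply le_natDegree_of_ne_zero
      rw [hcoeff]; exact hqN
  refine ⟨hdeg2, ?_⟩
  intro z hz
  have heval : ∀ w : ℂ, p.eval w = ∑ k ∈ Finset.range (N + 1),
      q.coeff k * (w ^ 2 + 1) ^ k * w ^ (N - k) := by
    intro w; rw [hp]; simp [eval_finset_sum]
  by_cases hz0 : z = 0
  · exfalso
    rw [IsRoot, heval, hz0] at hz
    rw [Finset.sum_eq_single N] at hz
    · simp at hz; exact hqN hz
    · intro k hk hkN
      have hk' : k ≤ N := by simpa [Nat.lt_succ_iff] using Finset.mem_range.mp hk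
      simp [zero_pow (by omega : N - k ≠ 0)]
    · intro h; exact absurd (Finset.self_mem_range_succ N) h
  · have key : p.eval z = z ^ N * q.eval (z + z⁻¹) := by
      rw [heval, eval_eq_sum_range, hdeg, Finset.mul_sum]
      apply Finset.sum_congr rfl
      intro k hk
      have hk' : k ≤ N := by simpa [Nat.lt_succ_iff] using Finset.mem_range.mp hk
      have hzN : z ^ N = z ^ k * z ^ (N - k) := by
        rw [← pow_add]; congr 1; omega
      have h2 : (z + z⁻¹) ^ k * z ^ k = (z ^ 2 + 1) ^ k := by
        rw [← mul_pow]; congr 1; field_simp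
      rw [hzN, ← h2]; ring
    have hroot : q.eval (z + z⁻¹) = 0 := by
      rw [IsRoot, key] at hz
      rcases mul_eq_zero.mp hz with h | h
      · exact absurd h (pow_ne_zero N hz0)
      · exact h
    have hre := hstab _ hroot
    have hns : 0 < Complex.normSq z := Complex.normSq_pos.mpr hz0
    rw [Complex.add_re, Complex.inv_re, div_eq_mul_inv] at hre
    nlinarith [inv_pos.mpr hns, hre, hns]
end
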